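/- Let Δ = q · ∏_{n≥1} (1 − q^n)^{24} ∈ ℚ[[q]] and let D = q·d/dq be the formal derivation on ℚ[[q]]. Then D(Δ) = E_2 · Δ; equivalently, the logarithmic derivative of Δ equals E_2. -/

import Mathlib

/-!
Write `P_M = ∏_{n ≤ M} (1 - q^n)^24`; the coefficients of `q·P_M` agree with those of `Δ` up to
degree `M + 1`. As `D` is a derivation and `D(1 - q^n) = -n q^n`, the logarithmic derivative of
`P_M` is the truncated Lambert series `L_M = -24 ∑_{n ≤ M} n q^n / (1 - q^n)`, and since
`∑_n n q^n / (1 - q^n) = ∑_m σ₁(m) q^m`, the series `1 + L_M` agrees with `E₂` up to degree `M`.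
Hence `D(q P_M) = (1 + L_M) q P_M`, and reading off the coefficient of `q^N` with `M = N` gives
`D Δ = E₂ Δ`.
-/

open Finset

def sigma' (k n : ℕ) : ℕ := ∑ d ∈ n.divisors, d ^ k

noncomputable def E₂ : PowerSeries ℚ :=
  PowerSeries.mk fun n => if n = 0 then 1 else -24 * (sigma' 1 n : ℚ)

/-- The formal derivation `D = q·d/dq` on `ℚ[[q]]`, sending `Σ aₙ qⁿ` to `Σ n·aₙ qⁿ`. -/
noncomputable def Dq (f : PowerSeries ℚ) : PowerSeries ℚ :=
  PowerSeries.mk fun n => (n : ℚ) * PowerSeries.coeff (R := ℚ) n f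

/-- `Δ = q·∏_{n≥1}(1−q^n)^24 ∈ ℚ[[q]]`, the infinite product defined coefficientwise
via the (stabilizing) partial products. -/
noncomputable def Δq : PowerSeries ℚ :=
  PowerSeries.X *
    PowerSeries.mk (fun N =>
      PowerSeries.coeff (R := ℚ) N (∏ n ∈ Finset.range (N + 1), (1 - PowerSeries.X ^ (n + 1)) ^ 24))

namespace Derivation

variable {R A ι : Type*} [CommRing R] [CommRing A] [Algebra R A]

theorem map_prod_of_map_eq_mul (D : Derivation R A A) (s : Finset ι) {f g : ι → A}
    (h : ∀ i ∈ s, D (f i) = g i * f i) :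
    D (∏ i ∈ s, f i) = (∑ i ∈ s, g i) * ∏ i ∈ s, f i := by
  classical
  induction s using Finset.induction_on with
  | empty => simp
  | insert j s hj ih =>
    rw [prod_insert hj, sum_insert hj, leibniz, smul_eq_mul, smul_eq_mul,
      h j (mem_insert_self j s), ih fun i hi => h i (mem_insert_of_mem hi)]
    ring

theorem map_pow_of_map_eq_mul (D : Derivation R A A) {a b : A} (h : D a = b * a) (k : ℕ) :
    D (a ^ k) = (k * b) * a ^ k := by
  simpa [prod_const, sum_const, nsmul_eq_mul] using
    D.map_prod_of_map_eq_mul (range k) (f := fun _ => a) fun _ _ => h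

end Derivation

open PowerSeries

noncomputable def DqDerivation : Derivation ℚ ℚ⟦X⟧ ℚ⟦X⟧ := (X : ℚ⟦X⟧) • d⁄dX ℚ

theorem DqDerivation_apply (f : ℚ⟦X⟧) : DqDerivation f = Dq f := by
  ext (_ | n)
  · simp [DqDerivation, Dq]
  · rw [DqDerivation, Derivation.smul_apply, smul_eq_mul, coeff_succ_X_mul, coeff_derivative, Dq,
      coeff_mk]
    push_cast
    ring

theorem DqDerivation_X : DqDerivation X = X := by
  simp [DqDerivation]

-- `q^m / (1 - q^m) = ∑_{j ≥ 1} q^{m j}`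
noncomputable def lambertTerm (m : ℕ) : ℚ⟦X⟧ :=
  mk fun i => if 0 < i ∧ m ∣ i then 1 else 0

theorem lambertTerm_mul_one_sub_X_pow {m : ℕ} (hm : 0 < m) :
    lambertTerm m * (1 - X ^ m) = X ^ m := by
  ext i
  rw [mul_sub, mul_one, map_sub, mul_comm, coeff_X_pow_mul', lambertTerm, coeff_mk, coeff_X_pow]
  rcases lt_trichotomy i m with h | rfl | h
  · simpa [h.not_ge, h.ne] using fun hi => Nat.not_dvd_of_pos_of_lt hi h
  · simp [hm]
  · simp [h.le, h.ne', hm.trans h, Nat.sub_pos_of_lt h, h.not_ge]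

theorem DqDerivation_one_sub_X_pow {m : ℕ} (hm : 0 < m) :
    DqDerivation (1 - X ^ m) = (-(m : ℚ⟦X⟧) * lambertTerm m) * (1 - X ^ m) := by
  rw [mul_assoc, lambertTerm_mul_one_sub_X_pow hm, map_sub, Derivation.map_one_eq_zero,
    Derivation.leibniz_pow, DqDerivation_X, smul_eq_mul, ← pow_succ, Nat.sub_add_cancel hm,
    nsmul_eq_mul]
  ring

noncomputable def eulerProduct (k M : ℕ) : ℚ⟦X⟧ :=
  ∏ n ∈ range M, (1 - X ^ (n + 1)) ^ k

noncomputable def lambertSum (k M : ℕ) : ℚ⟦X⟧ :=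
  ∑ n ∈ range M, C (-(k * (n + 1) : ℚ)) * lambertTerm (n + 1)

theorem DqDerivation_eulerProduct (k M : ℕ) :
    DqDerivation (eulerProduct k M) = lambertSum k M * eulerProduct k M := by
  refine DqDerivation.map_prod_of_map_eq_mul _ fun n _ => ?_
  rw [DqDerivation.map_pow_of_map_eq_mul (DqDerivation_one_sub_X_pow (Nat.add_one_pos n))]
  simp only [map_neg, map_mul, map_natCast, map_add, map_one]
  push_cast
  ring

theorem DqDerivation_X_mul_eulerProduct (k M : ℕ) :
    DqDerivation (X * eulerProduct k M) = (1 + lambertSum k M) * (X * eulerProduct k M) := by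
  rw [DqDerivation.leibniz, DqDerivation_X, DqDerivation_eulerProduct, smul_eq_mul, smul_eq_mul]
  ring

theorem X_pow_succ_dvd_eulerProduct_sub (k : ℕ) {M M' : ℕ} (h : M ≤ M') :
    X ^ (M + 1) ∣ eulerProduct k M' - eulerProduct k M := by
  have hfactor : ∀ n ∈ Ico M M',
      Ideal.Quotient.mk (Ideal.span {X ^ (M + 1)}) ((1 - X ^ (n + 1)) ^ k : ℚ⟦X⟧) = 1 := by
    intro n hn
    have hX : X ^ (n + 1) ∈ Ideal.span {(X : ℚ⟦X⟧) ^ (M + 1)} :=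
      Ideal.mem_span_singleton.mpr (pow_dvd_pow X (by rw [mem_Ico] at hn; omega))
    rw [map_pow, map_sub, map_one, Ideal.Quotient.eq_zero_iff_mem.mpr hX, sub_zero, one_pow]
  rw [← Ideal.mem_span_singleton, ← Ideal.Quotient.eq, eulerProduct, eulerProduct,
    ← prod_range_mul_prod_Ico _ h, map_mul, map_prod _ _ (Ico M M'), prod_eq_one hfactor, mul_one]

theorem coeff_eulerProduct_of_le (k : ℕ) {i M M' : ℕ} (hi : i ≤ M) (h : M ≤ M') :
    coeff i (eulerProduct k M') = coeff i (eulerProduct k M) := by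
  rw [← sub_eq_zero, ← map_sub]
  exact X_pow_dvd_iff.mp (X_pow_succ_dvd_eulerProduct_sub k h) i (Nat.lt_succ_of_le hi)

theorem Nat.sum_range_ite_dvd_eq_sum_divisors {M : Type*} [AddCommMonoid M] {i N : ℕ}
    (hi : i ≤ N) (f : ℕ → M) :
    ∑ n ∈ range N, (if 0 < i ∧ n + 1 ∣ i then f (n + 1) else 0) = ∑ d ∈ i.divisors, f d := by
  rw [range_eq_Ico, sum_Ico_add' (fun d => if 0 < i ∧ d ∣ i then f d else 0), ← sum_filter]
  congr 1
  ext d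
  simp only [mem_filter, mem_Ico, Nat.mem_divisors]
  constructor
  · rintro ⟨-, hi0, hd⟩
    exact ⟨hd, hi0.ne'⟩
  · rintro ⟨hd, hi0⟩
    have := Nat.le_of_dvd (Nat.pos_of_ne_zero hi0) hd
    have := Nat.pos_of_dvd_of_pos hd (Nat.pos_of_ne_zero hi0)
    omega

theorem coeff_lambertSum (k : ℕ) {i M : ℕ} (hi : i ≤ M) :
    coeff i (lambertSum k M) = -k * ∑ d ∈ i.divisors, (d : ℚ) := by
  simp only [lambertSum, lambertTerm, map_sum, coeff_C_mul, coeff_mk, mul_ite, mul_one, mul_zero]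
  rw [mul_sum, ← Nat.sum_range_ite_dvd_eq_sum_divisors hi]
  push_cast
  simp only [neg_mul]

theorem trunc_Δq (N : ℕ) : trunc (N + 1) Δq = trunc (N + 1) (X * eulerProduct 24 N) := by
  ext (_ | j) <;> rw [coeff_trunc, coeff_trunc]
  · simp [Δq]
  · split_ifs with h
    · rw [Δq, coeff_succ_X_mul, coeff_succ_X_mul, coeff_mk,
        coeff_eulerProduct_of_le 24 j.le_succ (by omega)]
      rfl
    · rfl

theorem trunc_E₂ (N : ℕ) : trunc (N + 1) E₂ = trunc (N + 1) (1 + lambertSum 24 N) := by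
  ext i
  rw [coeff_trunc, coeff_trunc]
  split_ifs with h
  · rw [E₂, coeff_mk, map_add, coeff_one, coeff_lambertSum 24 (by omega), sigma']
    rcases eq_or_ne i 0 with rfl | hi
    · simp
    · simp [hi]
  · rfl

/-- `D(Δ) = E₂ · Δ`: the logarithmic derivative of the discriminant is `E₂`. -/
theorem statement12 : Dq Δq = E₂ * Δq := by
  ext N
  have hΔ := trunc_Δq N
  calc coeff N (Dq Δq) = N * coeff N Δq := coeff_mk _ _
    _ = N * coeff N (X * eulerProduct 24 N) := by
      rw [← coeff_coe_trunc_of_lt (lt_add_one N), hΔ, coeff_coe_trunc_of_lt (lt_add_one N)]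
    _ = coeff N (DqDerivation (X * eulerProduct 24 N)) := by
      rw [DqDerivation_apply, Dq, coeff_mk]
    _ = coeff N ((1 + lambertSum 24 N) * (X * eulerProduct 24 N)) := by
      rw [DqDerivation_X_mul_eulerProduct]
    _ = coeff N (E₂ * Δq) := by
      rw [coeff_mul_eq_coeff_trunc_mul_trunc _ _ (lt_add_one N), ← trunc_E₂, ← hΔ,
        ← coeff_mul_eq_coeff_trunc_mul_trunc _ _ (lt_add_one N)]
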